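/- Let (A,d) be a commutative differential algebra over a commutative ring k (d: A → A k-linear with d(ab) = d(a)b + a d(b)). Extend d to a k-linear map on H_A = T(A) = ⊕_{n≥0} A^{⊗n} by d(a₁⊗⋯⊗a_n) = Σ_{i=1}^{n} a₁⊗⋯⊗d(a_i)⊗⋯⊗a_n and d = 0 on A^{⊗0} = k. Then the extended d is a derivation with respect to the quasi-shuffle product: d(𝔞 * 𝔟) = d(𝔞) * 𝔟 + 𝔞 * d(𝔟) for all 𝔞, 𝔟 ∈ H_A. -/

import Mathlib

/-!
Both sides of the identity are `k`-bilinear in `(𝔞, 𝔟)`, so it suffices to check it on words,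
by induction on the lengths.  For two nonempty words `a⊗𝔞` and `b⊗𝔟`, expanding both
sides with the recursions for `*` and `D` and applying the induction hypothesis to the three
shorter products `𝔞 * (b⊗𝔟)`, `(a⊗𝔞) * 𝔟` and `𝔞 * 𝔟` leaves, in the last of the three terms,
exactly the Leibniz rule `d(ab) = d(a)b + a d(b)`.
-/

open TensorAlgebra

namespace TensorAlgebra

variable {R M : Type*} [CommSemiring R] [AddCommMonoid M] [Module R M]

@[elab_as_elim]
theorem induction_ι_mul {C : TensorAlgebra R M → Prop} (one : C 1)
    (ι_mul : ∀ m x, C x → C (ι R m * x)) (smul : ∀ (r : R) x, C x → C (r • x))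
    (add : ∀ x y, C x → C y → C (x + y)) (x : TensorAlgebra R M) : C x := by
  -- Being preserved by left multiplication by `z` is closed under sums and products in `z`,
  -- so it suffices to check it on generators; then apply it to `x * 1`.
  have mul_left : ∀ z w : TensorAlgebra R M, C w → C (z * w) := by
    intro z
    induction z using TensorAlgebra.induction with
    | algebraMap r => intro w hw; simpa [Algebra.algebraMap_eq_smul_one] using smul r w hw
    | ι m => exact ι_mul m
    | mul z₁ z₂ h₁ h₂ => intro w hw; rw [mul_assoc]; exact h₁ _ (h₂ w hw)
    | add z₁ z₂ h₁ h₂ => intro w hw; rw [add_mul]; exact add _ _ (h₁ w hw) (h₂ w hw)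
  simpa using mul_left x 1 one

end TensorAlgebra

theorem quasiShuffle_derivation_general
    {k A : Type*} [CommRing k] [NonUnitalCommRing A] [Module k A]
    -- the quasi-shuffle product
    (q : TensorAlgebra k A →ₗ[k] TensorAlgebra k A →ₗ[k] TensorAlgebra k A)
    (hq_scalar_left : ∀ (c : k) (x : TensorAlgebra k A),
      q (algebraMap k (TensorAlgebra k A) c) x = c • x)
    (hq_scalar_right : ∀ (c : k) (x : TensorAlgebra k A),
      q x (algebraMap k (TensorAlgebra k A) c) = c • x)
    (hq_rec : ∀ (a b : A) (x y : TensorAlgebra k A),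
      q (ι k a * x) (ι k b * y) =
        ι k a * q x (ι k b * y) + ι k b * q (ι k a * x) y + ι k (a * b) * q x y)
    -- the differential operator on A
    (d : A →ₗ[k] A)
    (hd_leibniz : ∀ a b : A, d (a * b) = d a * b + a * d b)
    -- its extension D to H_A = T(A)
    (D : TensorAlgebra k A →ₗ[k] TensorAlgebra k A)
    (hD_one : D 1 = 0)
    (hD_rec : ∀ (a : A) (x : TensorAlgebra k A),
      D (ι k a * x) = ι k (d a) * x + ι k a * D x) :
    ∀ x y : TensorAlgebra k A, D (q x y) = q (D x) y + q x (D y) := by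
  have q_one_left (z : TensorAlgebra k A) : q 1 z = z := by simpa using hq_scalar_left 1 z
  have q_one_right (z : TensorAlgebra k A) : q z 1 = z := by simpa using hq_scalar_right 1 z
  intro x
  induction x using induction_ι_mul with
  | one => intro y; simp [q_one_left, hD_one]
  | ι_mul a u ih_u =>
    intro y
    induction y using induction_ι_mul with
    | one => simp [q_one_right, hD_one]
    | ι_mul b v ih_v =>
      simp only [hq_rec, hD_rec, hd_leibniz, ih_u, ih_v, map_add, LinearMap.add_apply,
        mul_add, add_mul]
      abel
    | smul c v ih_v => simp [ih_v]
    | add v₁ v₂ ih₁ ih₂ => simp only [map_add, ih₁, ih₂]; abel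
  | smul c u ih_u => intro y; simp [ih_u]
  | add u₁ u₂ ih₁ ih₂ => intro y; simp only [map_add, LinearMap.add_apply, ih₁, ih₂]; abel

/-- Let `(A, d)` be a commutative differential algebra over a commutative ring `k`
(`d` is `k`-linear with `d(ab) = d(a)b + a d(b)`).  Identify `H_A = T(A) = ⊕_{n≥0} A^{⊗n}`
with the tensor algebra of the `k`-module `A`, where the pure tensor `a₁⊗⋯⊗a_n`
corresponds to `ι a₁ * ⋯ * ι a_n` (concatenation product).  Extend `d` to the `k`-linear
map `D` on `H_A` with `D(1) = 0` and `D(a₁⊗⋯⊗a_n) = Σᵢ a₁⊗⋯⊗d(aᵢ)⊗⋯⊗a_n`, i.e.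
`D(a⊗𝔞) = d(a)⊗𝔞 + a⊗D(𝔞)`.  Then `D` is a derivation with respect to the quasi-shuffle
product `q`: `D(𝔞 * 𝔟) = D(𝔞) * 𝔟 + 𝔞 * D(𝔟)`. -/
theorem quasiShuffle_derivation
    {k A : Type*} [CommRing k] [NonUnitalCommRing A] [Module k A]
    [SMulCommClass k A A] [IsScalarTower k A A]
    -- the quasi-shuffle product
    (q : TensorAlgebra k A →ₗ[k] TensorAlgebra k A →ₗ[k] TensorAlgebra k A)
    (hq_scalar_left : ∀ (c : k) (x : TensorAlgebra k A),
      q (algebraMap k (TensorAlgebra k A) c) x = c • x)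
    (hq_scalar_right : ∀ (c : k) (x : TensorAlgebra k A),
      q x (algebraMap k (TensorAlgebra k A) c) = c • x)
    (hq_rec : ∀ (a b : A) (x y : TensorAlgebra k A),
      q (ι k a * x) (ι k b * y) =
        ι k a * q x (ι k b * y) + ι k b * q (ι k a * x) y + ι k (a * b) * q x y)
    -- the differential operator on A
    (d : A →ₗ[k] A)
    (hd_leibniz : ∀ a b : A, d (a * b) = d a * b + a * d b)
    -- its extension D to H_A = T(A)
    (D : TensorAlgebra k A →ₗ[k] TensorAlgebra k A)
    (hD_one : D 1 = 0)
    (hD_rec : ∀ (a : A) (x : TensorAlgebra k A),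
      D (ι k a * x) = ι k (d a) * x + ι k a * D x) :
    ∀ x y : TensorAlgebra k A, D (q x y) = q (D x) y + q x (D y) :=
  quasiShuffle_derivation_general q hq_scalar_left hq_scalar_right hq_rec d hd_leibniz D hD_one
    hD_rec
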